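/- Let f be differentiable and γ-quasar-convex with respect to a global minimizer x* (f need not be smooth), let R ≥ ‖x₀ − x*‖ with R > 0, and suppose the stochastic gradients satisfy E[‖g_t‖² | x₀, g₀, …, g_{t−1}] ≤ G² with G > 0. Running SGD for T iterations with constant step size α = R/(G√T) gives (1/T) ∑_{t=0}^{T−1} E[f(x_t) − f(x*)] ≤ RG/(γ√T). -/

import Mathlib

open MeasureTheory Finset
open scoped RealInnerProductSpace

/-!
The squared distance `D t = E‖x t − x*‖²` is a Lyapunov function. One step gives
`D (t+1) = D t − 2α E⟪x t − x*, g t⟫ + α² E‖g t‖²`. Since `x t` is a function of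
`g 0, …, g (t-1)`, unbiasedness lets us replace `g t` by `∇f (x t)` in the cross term, which
quasar-convexity bounds below by `γ (E f (x t) − f x*)`; the second-moment bound gives
`E‖g t‖² ≤ G²`. Telescoping, `2αγ ∑ (E f (x t) − f x*) ≤ R² + T α² G²`, and `α = R / (G √T)`
balances the two terms.
-/

namespace MeasureTheory

variable {Ω E : Type*} [NormedAddCommGroup E] [InnerProductSpace ℝ E]

theorem MemLp.integrable_inner {m₀ : MeasurableSpace Ω} {μ : Measure Ω} {u v : Ω → E}
    (hu : MemLp u 2 μ) (hv : MemLp v 2 μ) : Integrable (fun ω => ⟪u ω, v ω⟫) μ :=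
  (L2.integrable_inner (𝕜 := ℝ) (hu.toLp u) (hv.toLp v)).congr <| by
    filter_upwards [hu.coeFn_toLp, hv.coeFn_toLp] with ω h1 h2
    rw [h1, h2]

/-- `μ[·|m]` is the orthogonal projection of `L²` onto the `m`-measurable functions. -/
theorem integral_inner_condExp_right [CompleteSpace E] {m m₀ : MeasurableSpace Ω}
    {μ : Measure[m₀] Ω} [IsFiniteMeasure μ] (hm : m ≤ m₀) {y g : Ω → E}
    (hy : AEStronglyMeasurable[m] y μ) (hy2 : MemLp y 2 μ) (hg2 : MemLp g 2 μ) :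
    ∫ ω, ⟪y ω, μ[g|m] ω⟫ ∂μ = ∫ ω, ⟪y ω, g ω⟫ ∂μ := by
  have hY : AEStronglyMeasurable[m] (hy2.toLp y : Ω → E) μ := hy.congr hy2.coeFn_toLp.symm
  have h := inner_condExpL2_eq_inner_fun (𝕜 := ℝ) hm (hg2.toLp g) (hy2.toLp y) hY
  rw [L2.inner_def, L2.inner_def] at h
  calc ∫ ω, ⟪y ω, μ[g|m] ω⟫ ∂μ
      = ∫ ω, ⟪(condExpL2 E ℝ hm (hg2.toLp g) : Ω →₂[μ] E) ω, hy2.toLp y ω⟫ ∂μ := by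
        refine integral_congr_ae ?_
        filter_upwards [hg2.condExpL2_ae_eq_condExp (𝕜 := ℝ) hm, hy2.coeFn_toLp] with ω h1 h2
        rw [h1, h2, real_inner_comm]
    _ = ∫ ω, ⟪hg2.toLp g ω, hy2.toLp y ω⟫ ∂μ := h
    _ = ∫ ω, ⟪y ω, g ω⟫ ∂μ := by
        refine integral_congr_ae ?_
        filter_upwards [hg2.coeFn_toLp, hy2.coeFn_toLp] with ω h1 h2
        rw [h1, h2, real_inner_comm]

theorem integral_le_of_ae_condExp_le {m m₀ : MeasurableSpace Ω} {μ : Measure[m₀] Ω}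
    [IsProbabilityMeasure μ] (hm : m ≤ m₀) {φ : Ω → ℝ} {c : ℝ} (h : ∀ᵐ ω ∂μ, μ[φ|m] ω ≤ c) :
    ∫ ω, φ ω ∂μ ≤ c := by
  rw [← integral_condExp hm]
  simpa using integral_mono_ae integrable_condExp (integrable_const c) h

end MeasureTheory

section History

variable {Ω β : Type*} [MeasurableSpace β] (g : ℕ → Ω → β)

abbrev historySigma (t : ℕ) : MeasurableSpace Ω :=
  ⨆ i ∈ Finset.range t, MeasurableSpace.comap (g i) inferInstance

theorem historySigma_le [MeasurableSpace Ω] (hg : ∀ i, Measurable (g i)) (t : ℕ) :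
    historySigma g t ≤ ‹MeasurableSpace Ω› :=
  iSup₂_le fun i _ => (hg i).comap_le

theorem historySigma_mono : Monotone (historySigma g) := fun _ _ hst =>
  iSup₂_le fun i hi => le_iSup₂ (f := fun i (_ : i ∈ range _) =>
    MeasurableSpace.comap (g i) inferInstance) i (range_subset_range.2 hst hi)

theorem measurable_historySigma {i t : ℕ} (hi : i < t) : Measurable[historySigma g t] (g i) :=
  measurable_iff_comap_le.2 <| le_iSup₂ (f := fun i (_ : i ∈ range t) =>
    MeasurableSpace.comap (g i) inferInstance) i (mem_range.2 hi)

end History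

section SGD

variable {Ω E : Type*} [NormedAddCommGroup E] [InnerProductSpace ℝ E]
  {α : ℝ} {x₀ : E} {x g : ℕ → Ω → E}

theorem norm_sub_smul_sub_sq (u v z : E) (a : ℝ) :
    ‖u - a • v - z‖ ^ 2 = ‖u - z‖ ^ 2 - 2 * a * ⟪u - z, v⟫ + a ^ 2 * ‖v‖ ^ 2 := by
  rw [sub_right_comm, norm_sub_sq_real, real_inner_smul_right, norm_smul, mul_pow,
    Real.norm_eq_abs, sq_abs]
  ring

theorem measurable_sgd_iterate [MeasurableSpace E] [BorelSpace E] [SecondCountableTopology E]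
    (hx0 : x 0 = fun _ => x₀) (hstep : ∀ t, x (t + 1) = fun ω => x t ω - α • g t ω) (t : ℕ) :
    Measurable[historySigma g t] (x t) := by
  induction t with
  | zero => rw [hx0]; exact measurable_const
  | succ t ih =>
    rw [hstep]
    exact (ih.mono (historySigma_mono g t.le_succ) le_rfl).sub
      ((measurable_historySigma g t.lt_succ_self).const_smul α)

theorem memLp_sgd_iterate [MeasurableSpace Ω] {P : Measure Ω} [IsFiniteMeasure P]
    (hx0 : x 0 = fun _ => x₀) (hstep : ∀ t, x (t + 1) = fun ω => x t ω - α • g t ω)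
    (hg : ∀ t, MemLp (g t) 2 P) (t : ℕ) : MemLp (x t) 2 P := by
  induction t with
  | zero => rw [hx0]; exact memLp_const x₀
  | succ t ih => rw [hstep]; exact ih.sub ((hg t).const_smul α)

theorem integral_norm_sgd_step_sub_sq [MeasurableSpace Ω] {P : Measure Ω} [IsFiniteMeasure P]
    (hstep : ∀ t, x (t + 1) = fun ω => x t ω - α • g t ω) (z : E) {t : ℕ}
    (hx : MemLp (x t) 2 P) (hg : MemLp (g t) 2 P) :
    ∫ ω, ‖x (t + 1) ω - z‖ ^ 2 ∂P = ∫ ω, ‖x t ω - z‖ ^ 2 ∂P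
      - 2 * α * ∫ ω, ⟪x t ω - z, g t ω⟫ ∂P + α ^ 2 * ∫ ω, ‖g t ω‖ ^ 2 ∂P := by
  have hy : MemLp (fun ω => x t ω - z) 2 P := hx.sub (memLp_const z)
  have hnorm := hy.integrable_norm_pow two_ne_zero
  have hinner := (hy.integrable_inner hg).const_mul (2 * α)
  have hdiff : Integrable (fun ω => ‖x t ω - z‖ ^ 2 - 2 * α * ⟪x t ω - z, g t ω⟫) P :=
    hnorm.sub hinner
  simp only [hstep, norm_sub_smul_sub_sq]
  rw [integral_add hdiff ((hg.integrable_norm_pow two_ne_zero).const_mul _),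
    integral_sub hnorm hinner, integral_const_mul, integral_const_mul]

variable {f : E → ℝ} {f' : E → E} {xstar : E} {γ G : ℝ}

theorem quasar_gap_le_inner (hγ : 0 < γ) {y : E}
    (h : f xstar ≥ f y + (1 / γ) * ⟪f' y, xstar - y⟫) :
    γ * (f y - f xstar) ≤ ⟪y - xstar, f' y⟫ := by
  have h' : (1 / γ) * ⟪f' y, xstar - y⟫ ≤ f xstar - f y := by linarith
  rw [one_div_mul_eq_div, div_le_iff₀ hγ] at h'
  rw [real_inner_comm, ← neg_sub xstar y, inner_neg_right]
  linarith

theorem sgd_quasar_step [MeasurableSpace Ω] {P : Measure Ω} [IsProbabilityMeasure P]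
    [CompleteSpace E] [MeasurableSpace E] [BorelSpace E] [SecondCountableTopology E]
    (hγ : 0 < γ) (hα : 0 ≤ α) (hqc : ∀ y, f xstar ≥ f y + (1 / γ) * ⟪f' y, xstar - y⟫)
    (hx0 : x 0 = fun _ => x₀) (hstep : ∀ t, x (t + 1) = fun ω => x t ω - α • g t ω)
    (hgmeas : ∀ t, Measurable (g t)) (hg2 : ∀ t, MemLp (g t) 2 P) {t : ℕ}
    (hunbiased : P[g t|historySigma g t] =ᵐ[P] fun ω => f' (x t ω))
    (hmoment : ∀ᵐ ω ∂P, P[fun ω' => ‖g t ω'‖ ^ 2|historySigma g t] ω ≤ G ^ 2)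
    (hfint : Integrable (fun ω => f (x t ω)) P) :
    2 * α * γ * (∫ ω, f (x t ω) ∂P - f xstar) ≤
      ∫ ω, ‖x t ω - xstar‖ ^ 2 ∂P - ∫ ω, ‖x (t + 1) ω - xstar‖ ^ 2 ∂P + α ^ 2 * G ^ 2 := by
  have hm := historySigma_le g hgmeas t
  have hx2 := memLp_sgd_iterate hx0 hstep hg2 t
  have hy2 : MemLp (fun ω => x t ω - xstar) 2 P := hx2.sub (memLp_const xstar)
  have hy : AEStronglyMeasurable[historySigma g t] (fun ω => x t ω - xstar) P :=
    ((measurable_sgd_iterate hx0 hstep t).sub_const xstar).aestronglyMeasurable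
  have hinner_ae : (fun ω => ⟪x t ω - xstar, P[g t|historySigma g t] ω⟫)
      =ᵐ[P] fun ω => ⟪x t ω - xstar, f' (x t ω)⟫ := by
    filter_upwards [hunbiased] with ω hω
    rw [hω]
  have hcross : ∫ ω, ⟪x t ω - xstar, g t ω⟫ ∂P = ∫ ω, ⟪x t ω - xstar, f' (x t ω)⟫ ∂P := by
    rw [← integral_inner_condExp_right hm hy hy2 (hg2 t)]
    exact integral_congr_ae hinner_ae
  have hgap : γ * (∫ ω, f (x t ω) ∂P - f xstar) ≤ ∫ ω, ⟪x t ω - xstar, g t ω⟫ ∂P := by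
    have hint := (hy2.integrable_inner ((hg2 t).condExp one_le_two)).congr hinner_ae
    calc γ * (∫ ω, f (x t ω) ∂P - f xstar) = ∫ ω, γ * (f (x t ω) - f xstar) ∂P := by
          rw [integral_const_mul, integral_sub hfint (integrable_const _), integral_const,
            probReal_univ, one_smul]
      _ ≤ ∫ ω, ⟪x t ω - xstar, f' (x t ω)⟫ ∂P :=
          integral_mono ((hfint.sub (integrable_const _)).const_mul γ) hint
            fun ω => quasar_gap_le_inner hγ (hqc _)
      _ = _ := hcross.symm
  have hsq : ∫ ω, ‖g t ω‖ ^ 2 ∂P ≤ G ^ 2 := integral_le_of_ae_condExp_le hm hmoment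
  rw [integral_norm_sgd_step_sub_sq hstep xstar hx2 (hg2 t)]
  nlinarith [mul_le_mul_of_nonneg_left hgap (by positivity : (0 : ℝ) ≤ 2 * α),
    mul_le_mul_of_nonneg_left hsq (sq_nonneg α)]

end SGD

theorem sum_range_le_of_le_sub_succ {a D : ℕ → ℝ} {c : ℝ} {T : ℕ}
    (h : ∀ t, a t ≤ D t - D (t + 1) + c) (hD : 0 ≤ D T) :
    ∑ t ∈ range T, a t ≤ D 0 + T * c :=
  calc ∑ t ∈ range T, a t ≤ ∑ t ∈ range T, (D t - D (t + 1) + c) := sum_le_sum fun t _ => h t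
    _ = D 0 - D T + T * c := by
      rw [sum_add_distrib, sum_range_sub', sum_const, card_range, nsmul_eq_mul]
    _ ≤ D 0 + T * c := by linarith

theorem sgd_average_le_of_stepsize {S γ G R : ℝ} {T : ℕ} (hT : 0 < T) (hγ : 0 < γ)
    (hR : 0 < R) (hG : 0 < G)
    (h : 2 * (R / (G * √T)) * γ * S ≤ R ^ 2 + T * ((R / (G * √T)) ^ 2 * G ^ 2)) :
    (1 / (T : ℝ)) * S ≤ R * G / (γ * √T) := by
  have hT' : (0 : ℝ) < T := Nat.cast_pos.2 hT
  set s := √(T : ℝ)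
  have hs : 0 < s := Real.sqrt_pos.2 hT'
  rw [← Real.sq_sqrt hT'.le] at h ⊢
  field_simp at h ⊢
  nlinarith

theorem sgd_quasar_nonsmooth_general
    {Ω : Type*} [MeasurableSpace Ω] (P : Measure Ω) [IsProbabilityMeasure P]
    {n : ℕ} (f : EuclideanSpace ℝ (Fin n) → ℝ)
    (f' : EuclideanSpace ℝ (Fin n) → EuclideanSpace ℝ (Fin n))
    (xstar x₀ : EuclideanSpace ℝ (Fin n))
    (γ G R α : ℝ) (T : ℕ)
    (x g : ℕ → Ω → EuclideanSpace ℝ (Fin n))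
    (hγ0 : 0 < γ)
    (hqc : ∀ y, f xstar ≥ f y + (1/γ) * ⟪f' y, xstar - y⟫)
    (hR : ‖x₀ - xstar‖ ≤ R)
    (hR0 : 0 < R) (hG : 0 < G)
    (hαdef : α = R/(G*Real.sqrt T))
    (hx0 : x 0 = fun _ => x₀)
    (hstep : ∀ t, x (t+1) = fun ω => x t ω - α • g t ω)
    (hgmeas : ∀ t, Measurable (g t))
    (hgsqint : ∀ t, Integrable (fun ω => ‖g t ω‖^2) P)
    (hunbiased : ∀ t,
      MeasureTheory.condExp
          (⨆ i ∈ Finset.range t, MeasurableSpace.comap (g i) inferInstance) P (g t)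
        =ᵐ[P] fun ω => f' (x t ω))
    (hmoment : ∀ t, ∀ᵐ ω ∂P,
      MeasureTheory.condExp
          (⨆ i ∈ Finset.range t, MeasurableSpace.comap (g i) inferInstance) P
          (fun ω' => ‖g t ω'‖^2) ω ≤ G^2)
    (hfint : ∀ t, Integrable (fun ω => f (x t ω)) P)
:    (1/(T : ℝ)) * ∑ t ∈ Finset.range T, (∫ ω, f (x t ω) ∂P - f xstar)
      ≤ R*G/(γ*Real.sqrt T) := by
  rcases Nat.eq_zero_or_pos T with rfl | hT
  · simp
  have hg2 : ∀ t, MemLp (g t) 2 P := fun t =>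
    (memLp_two_iff_integrable_sq_norm (hgmeas t).aestronglyMeasurable).2 (hgsqint t)
  have hdescent := fun t => sgd_quasar_step hγ0 (by rw [hαdef]; positivity) hqc hx0 hstep
    hgmeas hg2 (hunbiased t) (hmoment t) (hfint t)
  have hsum := sum_range_le_of_le_sub_succ (T := T) hdescent
    (integral_nonneg fun ω => by positivity)
  have hdist₀ : ∫ ω, ‖x 0 ω - xstar‖ ^ 2 ∂P ≤ R ^ 2 := by
    simpa [hx0] using pow_le_pow_left₀ (norm_nonneg _) hR 2
  rw [← mul_sum] at hsum
  subst hαdef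
  exact sgd_average_le_of_stepsize hT hγ0 hR0 hG (by linarith)

theorem sgd_quasar_nonsmooth
    {Ω : Type*} [MeasurableSpace Ω] (P : Measure Ω) [IsProbabilityMeasure P]
    {n : ℕ} (f : EuclideanSpace ℝ (Fin n) → ℝ)
    (f' : EuclideanSpace ℝ (Fin n) → EuclideanSpace ℝ (Fin n))
    (xstar x₀ : EuclideanSpace ℝ (Fin n))
    (γ G R α : ℝ) (T : ℕ)
    (x g : ℕ → Ω → EuclideanSpace ℝ (Fin n))
    (hgrad : ∀ y, HasGradientAt f (f' y) y)
    (hmin : ∀ y, f xstar ≤ f y)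
    (hγ0 : 0 < γ) (hγ1 : γ ≤ 1)
    (hqc : ∀ y, f xstar ≥ f y + (1/γ) * ⟪f' y, xstar - y⟫)
    (hR : ‖x₀ - xstar‖ ≤ R)
    (hR0 : 0 < R) (hG : 0 < G)
    (hαdef : α = R/(G*Real.sqrt T))
    (hx0 : x 0 = fun _ => x₀)
    (hstep : ∀ t, x (t+1) = fun ω => x t ω - α • g t ω)
    (hgmeas : ∀ t, Measurable (g t))
    (hgint : ∀ t, Integrable (g t) P)
    (hgsqint : ∀ t, Integrable (fun ω => ‖g t ω‖^2) P)
    (hunbiased : ∀ t,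
      MeasureTheory.condExp
          (⨆ i ∈ Finset.range t, MeasurableSpace.comap (g i) inferInstance) P (g t)
        =ᵐ[P] fun ω => f' (x t ω))
    (hmoment : ∀ t, ∀ᵐ ω ∂P,
      MeasureTheory.condExp
          (⨆ i ∈ Finset.range t, MeasurableSpace.comap (g i) inferInstance) P
          (fun ω' => ‖g t ω'‖^2) ω ≤ G^2)
    (hfint : ∀ t, Integrable (fun ω => f (x t ω)) P)
:    (1/(T : ℝ)) * ∑ t ∈ Finset.range T, (∫ ω, f (x t ω) ∂P - f xstar)
      ≤ R*G/(γ*Real.sqrt T) :=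
  sgd_quasar_nonsmooth_general P f f' xstar x₀ γ G R α T x g hγ0 hqc hR hR0 hG hαdef hx0 hstep
    hgmeas hgsqint hunbiased hmoment hfint
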